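/- For θ > 0 and a < −θ < θ < b, there exists a one-layer spiking neural network with two input neurons (one encoding x as T_in + x, one auxiliary firing at T_in) and one output neuron, with weights (1,1), equal delays d, and threshold θ, realizing f(x) = x for x ≤ −θ, f(x) = (x−θ)/2 for −θ < x < θ, f(x) = 0 for x ≥ θ, on [a,b], with respect to T_in = a and T_out = θ + T_in + d. -/
import Mathlib


/-- `FiresAt w dl θ t τ`: SRM neuron with weights `w`, delays `dl`, threshold `θ`
fires at time `τ` on input firing times `t` (nonempty causal subset with positive
weight sum, arrival/firing order constraints, SRM firing-time formula). -/
def FiresAt {n : ℕ} (w dl : Fin n → ℝ) (θ : ℝ) (t : Fin n → ℝ) (τ : ℝ) : Prop :=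
  ∃ S : Finset (Fin n), S.Nonempty ∧ 0 < ∑ i ∈ S, w i ∧
    (∀ k ∈ S, t k + dl k < τ) ∧ (∀ k ∉ S, τ ≤ t k + dl k) ∧
    τ = (θ + ∑ i ∈ S, w i * (t i + dl i)) / (∑ i ∈ S, w i)

/-- The target CPWL function: `f(x) = x` for `x ≤ −θ`, `f(x) = (x−θ)/2` for
`−θ < x < θ`, `f(x) = 0` for `x ≥ θ`. -/
noncomputable def pwfun (θ x : ℝ) : ℝ :=
  if x ≤ -θ then x else if x < θ then (x - θ) / 2 else 0

/-- for `θ > 0` and `a < −θ < θ < b` there is a one-layer SNN with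
two input neurons (one encoding `x` as `T_in + x`, one auxiliary firing at
`T_in`) and one output neuron, weights `(1,1)`, equal delays `dd` and threshold
`θ`, whose output neuron fires at `T_out + pwfun θ x` for all `x ∈ [a,b]`, with
respect to `T_in = a` and `T_out = θ + T_in + dd`. -/
theorem stmt19 (θ a b : ℝ) (hθ : 0 < θ) (ha : a < -θ) (hb : θ < b) :
    ∃ dd : ℝ, 0 ≤ dd ∧
      ∀ x ∈ Set.Icc a b,
        FiresAt (fun _ : Fin 2 => (1 : ℝ)) (fun _ => dd) θ
          (fun i => if i = 0 then a + x else a)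
          ((θ + a + dd) + pwfun θ x) := by
  refine ⟨0, le_refl 0, fun x hx => ?_⟩
  unfold FiresAt pwfun
  by_cases h1 : x ≤ -θ
  · -- S = {0}
    refine ⟨{0}, Finset.singleton_nonempty 0, by norm_num, ?_, ?_, ?_⟩
    · intro k hk
      simp only [Finset.mem_singleton] at hk
      subst hk
      simp only [if_pos h1]
      norm_num
      linarith
    · intro k hk
      simp only [Finset.mem_singleton] at hk
      fin_cases k
      · exact absurd rfl hk
      · simp only [if_pos h1]
        norm_num
        linarith
    · simp [if_pos h1]
      ring
  · push_neg at h1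
    by_cases h2 : x < θ
    · -- S = {0, 1}
      refine ⟨{0, 1}, by simp, ?_, ?_, ?_, ?_⟩
      · simp
      · intro k hk
        fin_cases k
        · simp only [if_neg h1.not_ge, if_pos h2]
          norm_num
          linarith
        · simp only [if_neg h1.not_ge, if_pos h2]
          norm_num
          linarith
      · intro k hk
        fin_cases k <;> simp at hk
      · simp [if_neg h1.not_ge, if_pos h2]
        ring
    · -- S = {1}
      push_neg at h2
      refine ⟨{1}, Finset.singleton_nonempty 1, by norm_num, ?_, ?_, ?_⟩
      · intro k hk
        simp only [Finset.mem_singleton] at hk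
        subst hk
        simp only [if_neg h1.not_ge, if_neg h2.not_gt]
        norm_num
        exact hθ
      · intro k hk
        simp only [Finset.mem_singleton] at hk
        fin_cases k
        · simp only [if_neg h1.not_ge, if_neg h2.not_gt]
          norm_num
          linarith
        · exact absurd rfl hk
      · simp [if_neg h1.not_ge, if_neg h2.not_gt]
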